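/- For every fixed a ∈ (0,1), the limit as s → ∞ of a^{(1+s)/(2s)} (1−a)^{−1/(2s)} ∫_a^1 (1−x)^{1/(2s)} x^{−(1+s)/(2s)} (1/2 + 1/(2s(1−x))) dx equals 2√a − a. -/

import Mathlib

/-!
With `c = 1/(2s)`, the integrand is `(1-x)^c x^(-1/2-c)` plus the derivative of
`-(1-x)^c x^(1/2-c)`, which vanishes at `x = 1`; multiplied by the prefactor, its value at
`x = a` is exactly `a`. By dominated convergence the remaining integral tends to
`∫_a^1 x^(-1/2) dx = 2 - 2√a` as `c → 0⁺`, while the prefactor tends to `√a`.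
-/

open Filter MeasureTheory Set intervalIntegral Topology

noncomputable def intI (s a y : ℝ) : ℝ :=
  ∫ x in a..y, (1 - x) ^ (1 / (2 * s)) / x ^ ((1 + s) / (2 * s)) *
    (1 / 2 + 1 / (2 * s) * (1 / (1 - x)))

theorem hasDerivAt_neg_one_sub_rpow_mul_rpow {c x : ℝ} (hx0 : 0 < x) (hx1 : x < 1) :
    HasDerivAt (fun y : ℝ => -((1 - y) ^ c * y ^ (1 / 2 - c)))
      (c * (1 - x) ^ (c - 1) * x ^ (-(1 / 2 + c)) - (1 - x) ^ c * x ^ (-(1 / 2 + c)) / 2) x := by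
  have hu : 0 < 1 - x := by linarith
  have h1 : HasDerivAt (fun y : ℝ => (1 - y) ^ c) (-1 * c * (1 - x) ^ (c - 1)) x :=
    ((hasDerivAt_id x).const_sub 1).rpow_const (Or.inl hu.ne')
  have h2 : HasDerivAt (fun y : ℝ => y ^ (1 / 2 - c)) ((1 / 2 - c) * x ^ (1 / 2 - c - 1)) x :=
    Real.hasDerivAt_rpow_const (Or.inl hx0.ne')
  refine (h1.mul h2).neg.congr_deriv ?_
  have e1 : (1 - x) ^ c = (1 - x) ^ (c - 1) * (1 - x) := by
    rw [← Real.rpow_add_one hu.ne']; ring_nf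
  have e2 : x ^ (1 / 2 - c) = x ^ (-(1 / 2 + c)) * x := by
    rw [← Real.rpow_add_one hx0.ne']; ring_nf
  rw [e1, e2, show 1 / 2 - c - 1 = -(1 / 2 + c) by ring]
  ring

theorem integral_one_sub_rpow_div_rpow_mul_eq {a c : ℝ} (ha0 : 0 < a) (ha1 : a ≤ 1) (hc : 0 < c) :
    ∫ x in a..1, (1 - x) ^ c / x ^ (1 / 2 + c) * (1 / 2 + c * (1 / (1 - x))) =
      (1 - a) ^ c * a ^ (1 / 2 - c) + ∫ x in a..1, (1 - x) ^ c * x ^ (-(1 / 2 + c)) := by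
  set g : ℝ → ℝ := fun x => (1 - x) ^ c * x ^ (-(1 / 2 + c))
  have hpos : ∀ x ∈ uIcc a 1, 0 < x := fun x hx => ha0.trans_le (by simpa [ha1] using hx.1)
  have hg : IntervalIntegrable g volume a 1 := by
    refine ContinuousOn.intervalIntegrable fun x hx => ?_
    exact ContinuousAt.continuousWithinAt (by fun_prop (disch := grind))
  have hsing : IntervalIntegrable (fun x : ℝ => (1 - x) ^ (c - 1)) volume a 1 := by
    simpa using (intervalIntegrable_rpow' (a := 1 - a) (b := 0)
      (show (-1 : ℝ) < c - 1 by linarith)).comp_sub_left 1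
  have hderiv : IntervalIntegrable (fun x : ℝ =>
      c * (1 - x) ^ (c - 1) * x ^ (-(1 / 2 + c)) - g x / 2) volume a 1 := by
    refine IntervalIntegrable.sub ?_ (hg.div_const 2)
    simp only [mul_assoc]
    refine (hsing.mul_continuousOn fun x hx => ?_).const_mul c
    exact ContinuousAt.continuousWithinAt (by fun_prop (disch := grind))
  have hcont : ContinuousOn (fun y : ℝ => -((1 - y) ^ c * y ^ (1 / 2 - c))) (Icc a 1) := by
    rw [← uIcc_of_le ha1]
    intro x hx
    exact ContinuousAt.continuousWithinAt (by fun_prop (disch := grind))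
  have hftc := integral_eq_sub_of_hasDerivAt_of_le ha1 hcont
    (fun x hx => hasDerivAt_neg_one_sub_rpow_mul_rpow (ha0.trans hx.1) hx.2) hderiv
  have hsplit : ∀ᵐ x, x ∈ uIoc a 1 → (1 - x) ^ c / x ^ (1 / 2 + c) * (1 / 2 + c * (1 / (1 - x))) =
      (c * (1 - x) ^ (c - 1) * x ^ (-(1 / 2 + c)) - g x / 2) + g x := by
    filter_upwards [Measure.ae_ne volume 1] with x hx1 hx
    rw [uIoc_of_le ha1] at hx
    have hu : 0 < 1 - x := by grind
    rw [Real.rpow_sub_one hu.ne', Real.rpow_neg (ha0.trans hx.1).le]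
    simp only [g, Real.rpow_neg (ha0.trans hx.1).le]
    field_simp
    ring
  rw [integral_congr_ae hsplit, integral_add hderiv hg, hftc]
  simp [Real.zero_rpow hc.ne']

theorem tendsto_integral_one_sub_rpow_mul_rpow {a : ℝ} (ha0 : 0 < a) (ha1 : a ≤ 1) :
    Tendsto (fun c : ℝ => ∫ x in a..1, (1 - x) ^ c * x ^ (-(1 / 2 + c))) (𝓝[>] 0)
      (𝓝 (2 - 2 * √a)) := by
  have hlim : ∫ x in a..1, x ^ (-(1 / 2) : ℝ) = 2 - 2 * √a := by
    rw [integral_rpow (Or.inl (by norm_num)), Real.sqrt_eq_rpow]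
    norm_num
    ring
  rw [← hlim]
  refine tendsto_integral_filter_of_dominated_convergence (fun _ => a⁻¹) ?_ ?_
    intervalIntegrable_const ?_
  · filter_upwards [self_mem_nhdsWithin] with c hc
    refine ContinuousOn.aestronglyMeasurable (fun x hx => ?_) measurableSet_uIoc
    rw [uIoc_of_le ha1] at hx
    exact ContinuousAt.continuousWithinAt (by fun_prop (disch := grind))
  · filter_upwards [Ioo_mem_nhdsGT (show (0 : ℝ) < 1 / 2 by norm_num)] with c hc
    filter_upwards with x hx
    rw [uIoc_of_le ha1] at hx
    have hx0 : 0 < x := ha0.trans hx.1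
    have hu : 0 ≤ 1 - x := by linarith [hx.2]
    rw [Real.norm_of_nonneg (mul_nonneg (Real.rpow_nonneg hu c) (Real.rpow_nonneg hx0.le _))]
    calc (1 - x) ^ c * x ^ (-(1 / 2 + c)) ≤ 1 * x ^ (-1 : ℝ) :=
          mul_le_mul (Real.rpow_le_one hu (by linarith) hc.1.le)
            (Real.rpow_le_rpow_of_exponent_ge hx0 hx.2 (by linarith [hc.2]))
            (Real.rpow_nonneg hx0.le _) zero_le_one
      _ ≤ a⁻¹ := by
          rw [one_mul, Real.rpow_neg_one]
          exact inv_anti₀ ha0 hx.1.le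
  · filter_upwards [Measure.ae_ne volume 1] with x hx1 hx
    rw [uIoc_of_le ha1] at hx
    have hcont : ContinuousAt (fun c : ℝ => (1 - x) ^ c * x ^ (-(1 / 2 + c))) 0 := by
      fun_prop (disch := grind)
    simpa using hcont.tendsto.mono_left nhdsWithin_le_nhds

theorem tendsto_weight_nhdsGT_zero {a : ℝ} (ha : a ∈ Ioo (0 : ℝ) 1) :
    Tendsto (fun c : ℝ => a ^ (1 / 2 + c) / (1 - a) ^ c *
        ∫ x in a..1, (1 - x) ^ c / x ^ (1 / 2 + c) * (1 / 2 + c * (1 / (1 - x))))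
      (𝓝[>] 0) (𝓝 (2 * √a - a)) := by
  obtain ⟨ha0, ha1⟩ := ha
  have hfactor : Tendsto (fun c : ℝ => a ^ (1 / 2 + c) / (1 - a) ^ c) (𝓝[>] 0) (𝓝 √a) := by
    have hcont : ContinuousAt (fun c : ℝ => a ^ (1 / 2 + c) / (1 - a) ^ c) 0 := by
      fun_prop (disch := first | positivity | grind)
    simpa [Real.sqrt_eq_rpow] using hcont.tendsto.mono_left nhdsWithin_le_nhds
  have hlim := tendsto_const_nhds (x := a) |>.add
    (hfactor.mul (tendsto_integral_one_sub_rpow_mul_rpow ha0 ha1.le))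
  rw [show a + √a * (2 - 2 * √a) = 2 * √a - a by nlinarith [Real.mul_self_sqrt ha0.le]] at hlim
  refine hlim.congr' ?_
  filter_upwards [self_mem_nhdsWithin] with c hc
  have hpow : a ^ (1 / 2 + c) * a ^ (1 / 2 - c) = a := by
    rw [← Real.rpow_add ha0]; norm_num
  have hne : (1 - a) ^ c ≠ 0 := (Real.rpow_pos_of_pos (by linarith) c).ne'
  rw [integral_one_sub_rpow_div_rpow_mul_eq ha0 ha1.le hc, mul_add]
  congr 1
  rw [div_mul_eq_mul_div, mul_left_comm, mul_div_cancel_left₀ _ hne, hpow]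

/-- For fixed `a ∈ (0,1)`, the asymptotic genetic weight
`a^{(1+s)/(2s)} (1−a)^{−1/(2s)} ∫_a^1 (1−x)^{1/(2s)} x^{−(1+s)/(2s)} (1/2 + 1/(2s(1−x))) dx`
converges to `2√a − a` as `s → ∞`. -/
theorem asymptotic_weight_tendsto_strong_selection
    (a : ℝ) (ha : a ∈ Set.Ioo (0 : ℝ) 1) :
    Tendsto (fun s : ℝ =>
        a ^ ((1 + s) / (2 * s)) / (1 - a) ^ (1 / (2 * s)) * intI s a 1)
      atTop (nhds (2 * Real.sqrt a - a)) := by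
  have hc : Tendsto (fun s : ℝ => 1 / (2 * s)) atTop (𝓝[>] 0) := by
    simpa only [one_div, Function.comp_def, id] using
      tendsto_inv_atTop_nhdsGT_zero.comp (tendsto_id.const_mul_atTop (two_pos (α := ℝ)))
  refine ((tendsto_weight_nhdsGT_zero ha).comp hc).congr' ?_
  filter_upwards [eventually_gt_atTop 0] with s hs
  have hexp : (1 + s) / (2 * s) = 1 / 2 + 1 / (2 * s) := by field_simp; ring
  simp only [Function.comp_apply, intI, hexp]
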